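/- Let K be a field equipped with a nonarchimedean absolute value ‖·‖, let C > 0 and 0 < α < 1 be real numbers, and let A : ℕ × ℕ → K satisfy ‖A(i, j)‖ ≤ C·α^i for all i, j ∈ ℕ. Then for every finite subset S ⊂ ℕ of cardinality k, the determinant of the k × k matrix obtained by restricting A to S × S satisfies ‖det(A|_{S×S})‖ ≤ C^k · α^{i_1 + ⋯ + i_k} ≤ C^k · α^{k(k−1)/2}, where i_1 < ⋯ < i_k are the elements of S. -/
import Mathlib

/-- If `‖A i j‖ ≤ C·α^i` for all `i, j`, then for every finite `S ⊂ ℕ` of cardinality `k`,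
`‖det (A|_{S×S})‖ ≤ C^k · α^{∑_{i∈S} i} ≤ C^k · α^{k(k−1)/2}`. -/
theorem stmt5 {K : Type*} [NormedField K] [IsUltrametricDist K]
    (C α : ℝ) (hC : 0 < C) (hα0 : 0 < α) (hα1 : α < 1)
    (A : ℕ → ℕ → K) (hA : ∀ i j, ‖A i j‖ ≤ C * α ^ i) (S : Finset ℕ) :
    ‖(Matrix.of fun i j : {x // x ∈ S} => A i.1 j.1).det‖ ≤ C ^ S.card * α ^ (∑ i ∈ S, i) ∧
      C ^ S.card * α ^ (∑ i ∈ S, i) ≤ C ^ S.card * α ^ (S.card * (S.card - 1) / 2) := by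
  constructor
  · rw [Matrix.det_apply]
    refine IsUltrametricDist.norm_sum_le_of_forall_le_of_nonneg (by positivity) ?_
    intro σ _
    have hsign : ‖Equiv.Perm.sign σ • ∏ i : {x // x ∈ S},
        (Matrix.of fun i j : {x // x ∈ S} => A i.1 j.1) (σ i) i‖ =
        ‖∏ i : {x // x ∈ S}, (Matrix.of fun i j : {x // x ∈ S} => A i.1 j.1) (σ i) i‖ := by
      rcases Int.units_eq_one_or (Equiv.Perm.sign σ) with h | h <;> simp [h]
    rw [hsign, norm_prod]
    calc ∏ i : {x // x ∈ S}, ‖(Matrix.of fun i j : {x // x ∈ S} => A i.1 j.1) (σ i) i‖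
        ≤ ∏ i : {x // x ∈ S}, (C * α ^ ((σ i).1 : ℕ)) :=
          Finset.prod_le_prod (fun _ _ => norm_nonneg _) (fun i _ => hA _ _)
      _ = ∏ i : {x // x ∈ S}, (C * α ^ (i.1 : ℕ)) :=
          Equiv.prod_comp σ (fun i => C * α ^ (i.1 : ℕ))
      _ = C ^ S.card * α ^ (∑ i ∈ S, i) := by
          rw [Finset.prod_mul_distrib, Finset.prod_const, Finset.prod_pow_eq_pow_sum]
          congr 1
          · simp
          · congr 1
            rw [← Finset.sum_attach S (fun i => i)]; rfl
  · refine mul_le_mul_of_nonneg_left ?_ (by positivity)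
    refine pow_le_pow_of_le_one (le_of_lt hα0) (le_of_lt hα1) ?_
    rw [← Finset.sum_range_id]
    set h := S.orderEmbOfFin (rfl : S.card = S.card) with hh
    have key : ∀ m : ℕ, ∀ hm : m < S.card, m ≤ h ⟨m, hm⟩ := by
      intro m
      induction m with
      | zero => simp
      | succ n ih =>
        intro hm
        have h1 : n < S.card := Nat.lt_of_succ_lt hm
        have h2 := h.strictMono (show (⟨n, h1⟩ : Fin _) < ⟨n + 1, hm⟩ from by
          simp [Fin.lt_def])
        have := ih h1
        omega
    calc ∑ i ∈ Finset.range S.card, i = ∑ j : Fin S.card, (j : ℕ) := by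
          rw [Finset.sum_range fun i => i]
      _ ≤ ∑ j : Fin S.card, (h j : ℕ) := Finset.sum_le_sum fun j _ => key j j.2
      _ = ∑ i ∈ S, i := by
          rw [← Finset.sum_attach S (fun i => i)]
          exact Fintype.sum_equiv (S.orderIsoOfFin rfl).toEquiv _ _ (fun j => rfl)
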